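/- Let $R = R_1 \times R_2$ be a product of commutative rings, $M_1$ an $R_1$-module, $M_2$ an $R_2$-module, and $M = M_1 \times M_2$ the $R$-module with componentwise action. A submodule $N$ of $M$ is a second submodule if and only if $N = S_1 \times 0$ for a second submodule $S_1$ of $M_1$ or $N = 0 \times S_2$ for a second submodule $S_2$ of $M_2$. Consequently, for any submodule $N_1 \times N_2$ of $M$, $\mathrm{sec}(N_1 \times N_2) = \mathrm{sec}(N_1) \times \mathrm{sec}(N_2)$. -/

import Mathlib

/-!
The idempotents `(1, 0)` and `(0, 1)` split every submodule of `M₁ × M₂` as `N₁ × N₂`. On a second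
submodule `(1, 0)` acts as the identity or as zero, so one of the factors vanishes, and a product
with a zero factor is second exactly when the other factor is. The second radical is then computed
factorwise, as the second submodules below `N₁ × N₂` are the `S₁ × 0` and `0 × S₂` with `Sᵢ ≤ Nᵢ`.
-/

open Pointwise

variable {R : Type*} [CommRing R] {M : Type*} [AddCommGroup M] [Module R M]

/-- A nonzero submodule `S` is second if every ring element acts on it
surjectively (`a • S = S`) or as zero (`a • S = ⊥`). -/
def IsSecond (S : Submodule R M) : Prop :=
  S ≠ ⊥ ∧ ∀ a : R, a • S = S ∨ a • S = ⊥

/-- The second radical of `N`: the sum of all second submodules contained in `N`. -/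
def secRad (N : Submodule R M) : Submodule R M :=
  sSup {S : Submodule R M | IsSecond S ∧ S ≤ N}

/-- A proper submodule `L` is completely irreducible if whenever `L` is an
intersection of a family of submodules, it equals one of them. -/
def CompletelyIrreducible (L : Submodule R M) : Prop :=
  L ≠ ⊤ ∧ ∀ s : Set (Submodule R M), L = sInf s → L ∈ s

/-- 2-absorbing secondary submodule. -/
def Is2AbsSecondary (N : Submodule R M) : Prop :=
  N ≠ ⊥ ∧ ∀ a b : R, ∀ L : Submodule R M, CompletelyIrreducible L →
    (a * b) • N ≤ L →
    a • secRad N ≤ L ∨ b • secRad N ≤ L ∨ (a * b) • N = ⊥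

/-- Strongly 2-absorbing secondary submodule. -/
def IsS2AbsSecondary (N : Submodule R M) : Prop :=
  N ≠ ⊥ ∧ ∀ a b : R, ∀ K : Submodule R M,
    (a * b) • N ≤ K →
    a • secRad N ≤ K ∨ b • secRad N ≤ K ∨ (a * b) • N = ⊥

/-- Strongly 2-absorbing second submodule. -/
def IsS2AbsSecond (N : Submodule R M) : Prop :=
  N ≠ ⊥ ∧ ∀ a b : R, ∀ K : Submodule R M,
    (a * b) • N ≤ K →
    a • N ≤ K ∨ b • N ≤ K ∨ (a * b) • N = ⊥

/-- A 2-absorbing primary ideal. -/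
def Is2AbsPrimaryIdeal (I : Ideal R) : Prop :=
  I ≠ ⊤ ∧ ∀ a b c : R, a * b * c ∈ I →
    a * b ∈ I ∨ a * c ∈ I.radical ∨ b * c ∈ I.radical

/-- A comultiplication module: every submodule equals `(0 :_M Ann(N))`. -/
def IsComultiplication (R M : Type*) [CommRing R] [AddCommGroup M] [Module R M] : Prop :=
  ∀ N : Submodule R M, ∀ m : M, m ∈ N ↔ ∀ r ∈ N.annihilator, r • m = 0

/-- A secondary submodule: each `r : R` satisfies `r • N = N` or `r ^ t • N = ⊥`. -/
def IsSecondarySubmodule (N : Submodule R M) : Prop :=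
  N ≠ ⊥ ∧ ∀ r : R, r • N = N ∨ ∃ t : ℕ, 0 < t ∧ r ^ t • N = ⊥
section Prod

variable {R₁ R₂ : Type*} [CommRing R₁] [CommRing R₂]
  {M₁ M₂ : Type*} [AddCommGroup M₁] [AddCommGroup M₂]
  [Module R₁ M₁] [Module R₂ M₂]

/-- The componentwise module structure of `M₁ × M₂` over `R₁ × R₂`. -/
instance prodProdModule : Module (R₁ × R₂) (M₁ × M₂) where
  smul r m := (r.1 • m.1, r.2 • m.2)
  one_smul m := Prod.ext (one_smul _ _) (one_smul _ _)
  mul_smul r s m := Prod.ext (mul_smul _ _ _) (mul_smul _ _ _)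
  smul_zero r := Prod.ext (smul_zero _) (smul_zero _)
  smul_add r m n := Prod.ext (smul_add _ _ _) (smul_add _ _ _)
  add_smul r s m := Prod.ext (add_smul _ _ _) (add_smul _ _ _)
  zero_smul m := Prod.ext (zero_smul _ _) (zero_smul _ _)

@[simp] theorem prod_smul_def (r : R₁ × R₂) (m : M₁ × M₂) :
    r • m = (r.1 • m.1, r.2 • m.2) := rfl

/-- The product of a submodule of `M₁` and a submodule of `M₂`, as a submodule
of the `(R₁ × R₂)`-module `M₁ × M₂`. -/
def prodSub (N₁ : Submodule R₁ M₁) (N₂ : Submodule R₂ M₂) :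
    Submodule (R₁ × R₂) (M₁ × M₂) where
  carrier := N₁ ×ˢ N₂
  add_mem' := fun ha hb => ⟨N₁.add_mem ha.1 hb.1, N₂.add_mem ha.2 hb.2⟩
  zero_mem' := ⟨N₁.zero_mem, N₂.zero_mem⟩
  smul_mem' := fun c _ h => ⟨N₁.smul_mem c.1 h.1, N₂.smul_mem c.2 h.2⟩

theorem Submodule.zero_pointwise_smul (N : Submodule R M) : (0 : R) • N = ⊥ :=
  eq_bot_iff.2 fun _ hx => by
    obtain ⟨y, -, rfl⟩ := (Submodule.mem_smul_pointwise_iff_exists _ _ _).1 hx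
    rw [zero_smul]
    exact Submodule.zero_mem _

theorem le_secRad {S N : Submodule R M} (hS : IsSecond S) (hSN : S ≤ N) : S ≤ secRad N :=
  le_sSup ⟨hS, hSN⟩

@[simp] theorem mem_prodSub {N₁ : Submodule R₁ M₁} {N₂ : Submodule R₂ M₂} {x : M₁ × M₂} :
    x ∈ prodSub N₁ N₂ ↔ x.1 ∈ N₁ ∧ x.2 ∈ N₂ := Iff.rfl

theorem prodSub_le_prodSub_iff {N₁ P₁ : Submodule R₁ M₁} {N₂ P₂ : Submodule R₂ M₂} :
    prodSub N₁ N₂ ≤ prodSub P₁ P₂ ↔ N₁ ≤ P₁ ∧ N₂ ≤ P₂ := by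
  refine ⟨fun h => ⟨fun x hx => ?_, fun y hy => ?_⟩, fun h _ hx => ⟨h.1 hx.1, h.2 hx.2⟩⟩
  · exact (@h (x, 0) ⟨hx, N₂.zero_mem⟩).1
  · exact (@h (0, y) ⟨N₁.zero_mem, hy⟩).2

theorem prodSub_inj {N₁ P₁ : Submodule R₁ M₁} {N₂ P₂ : Submodule R₂ M₂} :
    prodSub N₁ N₂ = prodSub P₁ P₂ ↔ N₁ = P₁ ∧ N₂ = P₂ := by
  simp only [le_antisymm_iff, prodSub_le_prodSub_iff]
  tauto

theorem prodSub_bot_bot : prodSub (⊥ : Submodule R₁ M₁) (⊥ : Submodule R₂ M₂) = ⊥ :=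
  eq_bot_iff.2 fun _ hx => Prod.ext hx.1 hx.2

theorem prodSub_eq_bot_iff {N₁ : Submodule R₁ M₁} {N₂ : Submodule R₂ M₂} :
    prodSub N₁ N₂ = ⊥ ↔ N₁ = ⊥ ∧ N₂ = ⊥ := by
  rw [← prodSub_bot_bot, prodSub_inj]

theorem smul_prodSub (a : R₁ × R₂) (N₁ : Submodule R₁ M₁) (N₂ : Submodule R₂ M₂) :
    a • prodSub N₁ N₂ = prodSub (a.1 • N₁) (a.2 • N₂) := by
  ext ⟨x, y⟩
  simp only [Submodule.mem_smul_pointwise_iff_exists, mem_prodSub, Prod.exists, prod_smul_def,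
    Prod.mk.injEq]
  constructor
  · rintro ⟨u, v, ⟨hu, hv⟩, rfl, rfl⟩
    exact ⟨⟨u, hu, rfl⟩, ⟨v, hv, rfl⟩⟩
  · rintro ⟨⟨u, hu, rfl⟩, ⟨v, hv, rfl⟩⟩
    exact ⟨u, v, ⟨hu, hv⟩, rfl, rfl⟩

def prodFst (N : Submodule (R₁ × R₂) (M₁ × M₂)) : Submodule R₁ M₁ where
  carrier := {x | (x, 0) ∈ N}
  add_mem' hx hy := by simpa using N.add_mem hx hy
  zero_mem' := N.zero_mem
  smul_mem' c _ hx := by simpa using N.smul_mem (c, 0) hx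

def prodSnd (N : Submodule (R₁ × R₂) (M₁ × M₂)) : Submodule R₂ M₂ where
  carrier := {y | (0, y) ∈ N}
  add_mem' hx hy := by simpa using N.add_mem hx hy
  zero_mem' := N.zero_mem
  smul_mem' c _ hy := by simpa using N.smul_mem (0, c) hy

theorem prodSub_prodFst_prodSnd (N : Submodule (R₁ × R₂) (M₁ × M₂)) :
    prodSub (prodFst N) (prodSnd N) = N := by
  ext ⟨x, y⟩
  refine ⟨fun ⟨hx, hy⟩ => by simpa using N.add_mem hx hy, fun h => ⟨?_, ?_⟩⟩
  · show (x, 0) ∈ N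
    simpa using N.smul_mem (1, 0) h
  · show (0, y) ∈ N
    simpa using N.smul_mem (0, 1) h

theorem exists_eq_prodSub (N : Submodule (R₁ × R₂) (M₁ × M₂)) :
    ∃ N₁ N₂, N = prodSub N₁ N₂ :=
  ⟨_, _, (prodSub_prodFst_prodSnd N).symm⟩

theorem isSecond_prodSub_bot_iff {S : Submodule R₁ M₁} :
    IsSecond (prodSub S (⊥ : Submodule R₂ M₂)) ↔ IsSecond S := by
  simp only [IsSecond, smul_prodSub, Submodule.smul_bot', prodSub_eq_bot_iff, prodSub_inj,
    ne_eq, and_true, Prod.forall]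
  exact and_congr_right' ⟨fun h a => h a 0, fun h a _ => h a⟩

theorem isSecond_bot_prodSub_iff {S : Submodule R₂ M₂} :
    IsSecond (prodSub (⊥ : Submodule R₁ M₁) S) ↔ IsSecond S := by
  simp only [IsSecond, smul_prodSub, Submodule.smul_bot', prodSub_eq_bot_iff, prodSub_inj,
    ne_eq, true_and, Prod.forall]
  exact and_congr_right' ⟨fun h a => h 0 a, fun h _ a => h a⟩

theorem IsSecond.eq_bot_or_eq_bot {N₁ : Submodule R₁ M₁} {N₂ : Submodule R₂ M₂}
    (h : IsSecond (prodSub N₁ N₂)) : N₁ = ⊥ ∨ N₂ = ⊥ := by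
  have he : ((1, 0) : R₁ × R₂) • prodSub N₁ N₂ = prodSub N₁ ⊥ := by
    rw [smul_prodSub, one_smul, Submodule.zero_pointwise_smul]
  rcases h.2 (1, 0) with h₁ | h₁ <;> rw [he] at h₁
  · exact Or.inr (prodSub_inj.1 h₁).2.symm
  · exact Or.inl (prodSub_eq_bot_iff.1 h₁).1

theorem isSecond_iff (N : Submodule (R₁ × R₂) (M₁ × M₂)) :
    IsSecond N ↔
      (∃ S₁ : Submodule R₁ M₁, IsSecond S₁ ∧ N = prodSub S₁ ⊥) ∨
      (∃ S₂ : Submodule R₂ M₂, IsSecond S₂ ∧ N = prodSub ⊥ S₂) := by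
  refine ⟨fun h => ?_, ?_⟩
  · obtain ⟨N₁, N₂, rfl⟩ := exists_eq_prodSub N
    rcases h.eq_bot_or_eq_bot with rfl | rfl
    · exact Or.inr ⟨N₂, isSecond_bot_prodSub_iff.1 h, rfl⟩
    · exact Or.inl ⟨N₁, isSecond_prodSub_bot_iff.1 h, rfl⟩
  · rintro (⟨S₁, hS₁, rfl⟩ | ⟨S₂, hS₂, rfl⟩)
    · exact isSecond_prodSub_bot_iff.2 hS₁
    · exact isSecond_bot_prodSub_iff.2 hS₂

theorem secRad_prodSub (N₁ : Submodule R₁ M₁) (N₂ : Submodule R₂ M₂) :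
    secRad (prodSub N₁ N₂) = prodSub (secRad N₁) (secRad N₂) := by
  refine le_antisymm (sSup_le ?_) ?_
  · rintro S ⟨hS, hSN⟩
    rcases (isSecond_iff S).1 hS with ⟨S₁, hS₁, rfl⟩ | ⟨S₂, hS₂, rfl⟩
    · exact prodSub_le_prodSub_iff.2
        ⟨le_secRad hS₁ (prodSub_le_prodSub_iff.1 hSN).1, bot_le⟩
    · exact prodSub_le_prodSub_iff.2
        ⟨bot_le, le_secRad hS₂ (prodSub_le_prodSub_iff.1 hSN).2⟩
  · obtain ⟨X₁, X₂, hX⟩ := exists_eq_prodSub (secRad (prodSub N₁ N₂))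
    rw [hX, prodSub_le_prodSub_iff]
    constructor <;> refine sSup_le fun S ⟨hS, hSN⟩ => ?_
    · have hle := le_secRad (isSecond_prodSub_bot_iff.2 hS)
        (prodSub_le_prodSub_iff.2 ⟨hSN, bot_le⟩ : prodSub S ⊥ ≤ prodSub N₁ N₂)
      exact (prodSub_le_prodSub_iff.1 (hX ▸ hle)).1
    · have hle := le_secRad (isSecond_bot_prodSub_iff.2 hS)
        (prodSub_le_prodSub_iff.2 ⟨bot_le, hSN⟩ : prodSub ⊥ S ≤ prodSub N₁ N₂)
      exact (prodSub_le_prodSub_iff.1 (hX ▸ hle)).2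

theorem stmt17 :
    (∀ N : Submodule (R₁ × R₂) (M₁ × M₂),
      (IsSecond N ↔
        (∃ S₁ : Submodule R₁ M₁, IsSecond S₁ ∧ N = prodSub S₁ ⊥) ∨
        (∃ S₂ : Submodule R₂ M₂, IsSecond S₂ ∧ N = prodSub ⊥ S₂))) ∧
    (∀ (N₁ : Submodule R₁ M₁) (N₂ : Submodule R₂ M₂),
      secRad (prodSub N₁ N₂) = prodSub (secRad N₁) (secRad N₂)) :=
  ⟨isSecond_iff, secRad_prodSub⟩

end Prod
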